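/- Let c₀ > 0 and m, m_σ : 𝕋^d → (0,∞) measurable with m ≥ c₀ everywhere. Then |∫_{𝕋^d} (log m_σ - log m) dx| ≤ (2/c₀) ∫_{{m_σ ≤ c₀/2}} (m - m_σ)(log m - log m_σ) dx + (2/c₀) ∫_{𝕋^d} |m_σ - m| dx. -/

import Mathlib

open MeasureTheory

/-- The unit cube `Q = (-1/2, 1/2)^d`, a fundamental domain for `𝕋^d`. -/
def Qcube (d : ℕ) : Set (EuclideanSpace ℝ (Fin d)) :=
  {x | ∀ i, x i ∈ Set.Ioo (-(1 / 2) : ℝ) (1 / 2)}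

/-!
Split according to whether `m_σ ≤ c₀/2`. Where it is, `m - m_σ ≥ c₀/2` and `log m - log m_σ ≥ 0`,
so `|log m_σ - log m| ≤ (2/c₀)(m - m_σ)(log m - log m_σ)`. Where it is not, both values are at
least `c₀/2`, where `log` is `(2/c₀)`-Lipschitz. Integrating this pointwise bound gives the claim.
-/

namespace Real

lemma abs_log_sub_log_le_of_le {c a b : ℝ} (hc : 0 < c) (ha : c ≤ a) (hb : c ≤ b) :
    |log a - log b| ≤ |a - b| / c := by
  wlog hba : b ≤ a generalizing a b
  · rw [abs_sub_comm, abs_sub_comm a b]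
    exact this hb ha (le_of_not_ge hba)
  have ha₀ : 0 < a := hc.trans_le ha
  have hb₀ : 0 < b := hc.trans_le hb
  rw [abs_of_nonneg (sub_nonneg.2 (log_le_log hb₀ hba)), abs_of_nonneg (sub_nonneg.2 hba),
    ← log_div ha₀.ne' hb₀.ne']
  calc log (a / b) ≤ a / b - 1 := log_le_sub_one_of_pos (div_pos ha₀ hb₀)
    _ = (a - b) / b := by field_simp
    _ ≤ (a - b) / c := div_le_div_of_nonneg_left (sub_nonneg.2 hba) hc hb

lemma log_sub_log_le_of_le_sub {δ a b : ℝ} (hδ : 0 < δ) (hb : 0 < b) (hab : δ ≤ a - b) :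
    log a - log b ≤ (a - b) * (log a - log b) / δ := by
  have hlog : 0 ≤ log a - log b := sub_nonneg.2 (log_le_log hb (by linarith))
  rw [le_div_iff₀ hδ, mul_comm (a - b)]
  exact mul_le_mul_of_nonneg_left hab hlog

lemma abs_log_sub_log_le_of_lower_bound {c a b : ℝ} (hc : 0 < c) (ha : c ≤ a) (hb : 0 < b) :
    |log b - log a|
      ≤ 2 / c * (if b ≤ c / 2 then (a - b) * (log a - log b) else 0) + 2 / c * |b - a| := by
  split_ifs with hbc
  · have hlog : log b ≤ log a := log_le_log hb (by linarith)
    calc |log b - log a| = log a - log b := by rw [abs_sub_comm, abs_of_nonneg (by linarith)]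
      _ ≤ (a - b) * (log a - log b) / (c / 2) :=
        log_sub_log_le_of_le_sub (by positivity) hb (by linarith)
      _ = 2 / c * ((a - b) * (log a - log b)) := by field_simp
      _ ≤ _ := le_add_of_nonneg_right (by positivity)
  · calc |log b - log a| ≤ |b - a| / (c / 2) :=
        abs_log_sub_log_le_of_le (by positivity) (le_of_not_ge hbc) (by linarith)
      _ = 2 / c * 0 + 2 / c * |b - a| := by ring

end Real

theorem stmt19_general {d : ℕ} (c₀ : ℝ) (hc₀ : 0 < c₀)
    (m mσ : EuclideanSpace ℝ (Fin d) → ℝ)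
    (hmσmeas : Measurable mσ)
    (hmlb : ∀ x, c₀ ≤ m x) (hmσpos : ∀ x, 0 < mσ x)
    (hlogint : IntegrableOn (fun x => Real.log (mσ x) - Real.log (m x)) (Qcube d))
    (hcrossint : IntegrableOn
      (fun x => (m x - mσ x) * (Real.log (m x) - Real.log (mσ x)))
      (Qcube d ∩ {x | mσ x ≤ c₀ / 2}))
    (hdiffint : IntegrableOn (fun x => |mσ x - m x|) (Qcube d)) :
    |∫ x in Qcube d, (Real.log (mσ x) - Real.log (m x))|
      ≤ (2 / c₀) * (∫ x in Qcube d ∩ {x | mσ x ≤ c₀ / 2},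
            (m x - mσ x) * (Real.log (m x) - Real.log (mσ x)))
        + (2 / c₀) * ∫ x in Qcube d, |mσ x - m x| := by
  set P : Set (EuclideanSpace ℝ (Fin d)) := {x | mσ x ≤ c₀ / 2}
  set cross := fun x => (m x - mσ x) * (Real.log (m x) - Real.log (mσ x))
  have hP : MeasurableSet P := measurableSet_le hmσmeas measurable_const
  have hcross : IntegrableOn (P.indicator cross) (Qcube d) :=
    (integrableOn_indicator_iff hP).2 (by rwa [Set.inter_comm])
  have hbound : ∀ x, |Real.log (mσ x) - Real.log (m x)|
      ≤ 2 / c₀ * P.indicator cross x + 2 / c₀ * |mσ x - m x| := fun x => by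
    simpa only [Set.indicator_apply, Set.mem_ofPred_eq, P, cross] using
      Real.abs_log_sub_log_le_of_lower_bound hc₀ (hmlb x) (hmσpos x)
  calc |∫ x in Qcube d, (Real.log (mσ x) - Real.log (m x))|
      ≤ ∫ x in Qcube d, |Real.log (mσ x) - Real.log (m x)| := abs_integral_le_integral_abs
    _ ≤ ∫ x in Qcube d, (2 / c₀ * P.indicator cross x + 2 / c₀ * |mσ x - m x|) :=
        integral_mono hlogint.abs ((hcross.const_mul _).add (hdiffint.const_mul _)) hbound
    _ = _ := by
        rw [integral_add (hcross.const_mul _) (hdiffint.const_mul _), integral_const_mul,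
          integral_const_mul, setIntegral_indicator hP]

/-- Logarithm splitting estimate: for `m ≥ c₀ > 0` and `m_σ > 0`,
`|∫ (log m_σ - log m)| ≤ (2/c₀) ∫_{m_σ ≤ c₀/2} (m - m_σ)(log m - log m_σ)
  + (2/c₀) ∫ |m_σ - m|`. -/
theorem stmt19 {d : ℕ} (c₀ : ℝ) (hc₀ : 0 < c₀)
    (m mσ : EuclideanSpace ℝ (Fin d) → ℝ)
    (hmmeas : Measurable m) (hmσmeas : Measurable mσ)
    (hmlb : ∀ x, c₀ ≤ m x) (hmσpos : ∀ x, 0 < mσ x)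
    (hlogint : IntegrableOn (fun x => Real.log (mσ x) - Real.log (m x)) (Qcube d))
    (hcrossint : IntegrableOn
      (fun x => (m x - mσ x) * (Real.log (m x) - Real.log (mσ x)))
      (Qcube d ∩ {x | mσ x ≤ c₀ / 2}))
    (hdiffint : IntegrableOn (fun x => |mσ x - m x|) (Qcube d)) :
    |∫ x in Qcube d, (Real.log (mσ x) - Real.log (m x))|
      ≤ (2 / c₀) * (∫ x in Qcube d ∩ {x | mσ x ≤ c₀ / 2},
            (m x - mσ x) * (Real.log (m x) - Real.log (mσ x)))
        + (2 / c₀) * ∫ x in Qcube d, |mσ x - m x| :=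
  stmt19_general c₀ hc₀ m mσ hmσmeas hmlb hmσpos hlogint hcrossint hdiffint
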